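/- arXiv:2511.04582 — 2 statements merged into one kernel-verified Lean document; each statement's English description precedes it below -/
import Mathlib

section
/- Let F(k) be the free group on k generators and n ≥ 1. An endomorphism of F(k)/γ_{n+1}(F(k)) is an automorphism if and only if the induced endomorphism of the abelianization F(k)/γ₂(F(k)) ≅ ℤ^k is an automorphism. -/
/-!
A subgroup of a nilpotent group that generates it modulo the commutator subgroup is the whole
group (induct along the quotients by the centre: if `H` and the centre generate `G`, then every
commutator of `G` is a commutator of elements of `H`). Hence an endomorphism `e` of the free
nilpotent group that is onto on the abelianization is onto. Freeness then gives a section `f`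
with `e ∘ f = id`; `f` is onto on the abelianization as well, hence onto, so `e` is injective.
-/

open scoped commutatorElement Pointwise

abbrev FreeNilpotentGroup (X : Type*) (n : ℕ) :=
  FreeGroup X ⧸ (⊤ : Subgroup (FreeGroup X)).lowerCentralSeries n

section LowerCentralSeries

variable {G K : Type*} [Group G] [Group K]

theorem Subgroup.map_top_lowerCentralSeries_of_surjective {f : G →* K}
    (hf : Function.Surjective f) (n : ℕ) :
    ((⊤ : Subgroup G).lowerCentralSeries n).map f = (⊤ : Subgroup K).lowerCentralSeries n := by
  rw [map_lowerCentralSeries, map_top_of_surjective f hf]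

theorem Subgroup.top_lowerCentralSeries_quotient_eq_bot (n : ℕ) :
    (⊤ : Subgroup (G ⧸ (⊤ : Subgroup G).lowerCentralSeries n)).lowerCentralSeries n = ⊥ := by
  rw [← map_top_lowerCentralSeries_of_surjective (QuotientGroup.mk'_surjective _),
    map_eq_bot_iff, QuotientGroup.ker_mk']

instance Group.isNilpotent_quotient_lowerCentralSeries (n : ℕ) :
    Group.IsNilpotent (G ⧸ (⊤ : Subgroup G).lowerCentralSeries n) :=
  Subgroup.nilpotent_iff_lowerCentralSeries.mpr
    ⟨n, Subgroup.top_lowerCentralSeries_quotient_eq_bot n⟩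

end LowerCentralSeries

section Nilpotent

variable {G : Type*} [Group G]

theorem commutatorElement_mul_mem_center {a b z w : G} (hz : z ∈ Subgroup.center G)
    (hw : w ∈ Subgroup.center G) : ⁅a * z, b * w⁆ = ⁅a, b⁆ := by
  have hzc : ∀ c : G, ⁅z, c⁆ = 1 := fun c =>
    commutatorElement_eq_one_iff_mul_comm.mpr (Subgroup.mem_center_iff.mp hz c).symm
  have hcw : ∀ c : G, ⁅c, w⁆ = 1 := fun c =>
    commutatorElement_eq_one_iff_mul_comm.mpr (Subgroup.mem_center_iff.mp hw c)
  rw [commutatorElement_mul_left_eq_conj_mul, hzc, commutatorElement_mul_right_eq_mul_conj, hcw]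
  group

theorem Subgroup.commutator_le_of_sup_center_eq_top {H : Subgroup G}
    (hH : H ⊔ center G = ⊤) : _root_.commutator G ≤ H := by
  rw [_root_.commutator_def, commutator_le]
  intro g _ g' _
  have hmem : ∀ x : G, x ∈ (H : Set G) * (center G : Set G) := fun x => by
    rw [← mul_normal, hH]; trivial
  obtain ⟨a, ha, z, hz, rfl⟩ := hmem g
  obtain ⟨b, hb, w, hw, rfl⟩ := hmem g'
  rw [commutatorElement_mul_mem_center hz hw]
  exact H.commutator_le_self (commutator_mem_commutator ha hb)

theorem Subgroup.eq_top_of_sup_commutator_eq_top [Group.IsNilpotent G] {H : Subgroup G}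
    (hH : H ⊔ _root_.commutator G = ⊤) : H = ⊤ := by
  suffices ∀ H : Subgroup G, H ⊔ _root_.commutator G = ⊤ → H = ⊤ from this H hH
  clear H hH
  refine Group.nilpotent_center_quotient_ind
    (P := fun G _ _ => ∀ H : Subgroup G, H ⊔ _root_.commutator G = ⊤ → H = ⊤) G
    (fun _ _ _ _ _ => Subsingleton.elim _ _) fun G _ _ ih H hH => ?_
  set π := QuotientGroup.mk' (Subgroup.center G)
  have hπ : Function.Surjective π := QuotientGroup.mk'_surjective _
  have hmap : H.map π ⊔ _root_.commutator (G ⧸ Subgroup.center G) = ⊤ := by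
    rw [_root_.commutator_def, ← MonoidHom.range_eq_top.mpr hπ, ← map_commutator_eq,
      ← Subgroup.map_sup, hH, ← MonoidHom.range_eq_map]
  have hsup : H ⊔ Subgroup.center G = ⊤ := by
    simpa [π, Subgroup.comap_map_eq] using congrArg (Subgroup.comap π) (ih _ hmap)
  rw [← hH, sup_eq_left.mpr (commutator_le_of_sup_center_eq_top hsup)]

theorem MonoidHom.surjective_of_surjective_abelianizationMap {K : Type*} [Group K]
    [Group.IsNilpotent G] (f : K →* G) (hf : Function.Surjective (Abelianization.map f)) :
    Function.Surjective f := by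
  have hof : Function.Surjective (Abelianization.of.comp f) := by
    have hcomm : ⇑(Abelianization.of.comp f) = Abelianization.map f ∘ Abelianization.of :=
      funext fun x => (Abelianization.map_of f x).symm
    rw [hcomm]
    exact hf.comp (QuotientGroup.mk'_surjective _)
  have hsup : f.range ⊔ commutator G = ⊤ := by
    rw [← Abelianization.ker_of, ← Subgroup.comap_map_eq, ← MonoidHom.range_comp,
      MonoidHom.range_eq_top.mpr hof, Subgroup.comap_top]
  exact MonoidHom.range_eq_top.mp (Subgroup.eq_top_of_sup_commutator_eq_top hsup)

end Nilpotent

namespace FreeNilpotentGroup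

variable {X : Type*} {n : ℕ}

theorem exists_rightInverse {Q : Type*} [Group Q]
    (hQ : (⊤ : Subgroup Q).lowerCentralSeries n = ⊥) {e : Q →* FreeNilpotentGroup X n}
    (he : Function.Surjective e) : ∃ f : FreeNilpotentGroup X n →* Q, e.comp f = .id _ := by
  choose s hs using fun x : X => he (FreeGroup.of x)
  have hker : (⊤ : Subgroup (FreeGroup X)).lowerCentralSeries n ≤ (FreeGroup.lift s).ker := by
    rw [← Subgroup.map_eq_bot_iff, ← le_bot_iff, ← hQ, Subgroup.map_lowerCentralSeries]
    exact Subgroup.lowerCentralSeries_mono n le_top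
  refine ⟨QuotientGroup.lift _ (FreeGroup.lift s) hker, ?_⟩
  refine QuotientGroup.monoidHom_ext _ (FreeGroup.ext_hom _ _ fun x => ?_)
  simp [hs]

theorem bijective_of_bijective_abelianizationMap
    (e : FreeNilpotentGroup X n →* FreeNilpotentGroup X n)
    (he : Function.Bijective (Abelianization.map e)) : Function.Bijective e := by
  have he_surj : Function.Surjective e := e.surjective_of_surjective_abelianizationMap he.2
  obtain ⟨f, hef⟩ :=
    exists_rightInverse (Subgroup.top_lowerCentralSeries_quotient_eq_bot n) he_surj
  have hef_ab : (Abelianization.map e).comp (Abelianization.map f) = .id _ := by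
    rw [Abelianization.map_comp, hef, Abelianization.map_id]
  have hf_ab : Function.Surjective (Abelianization.map f) := fun y =>
    ⟨Abelianization.map e y, he.1 (DFunLike.congr_fun hef_ab (Abelianization.map e y))⟩
  have hf : Function.Surjective f := f.surjective_of_surjective_abelianizationMap hf_ab
  have hef_left : Function.LeftInverse e f := DFunLike.congr_fun hef
  exact ⟨(hef_left.rightInverse_of_surjective hf).injective, he_surj⟩

end FreeNilpotentGroup

theorem freeNilpotent_end_bijective_iff_abelianization_general (k n : ℕ)
    (e : (FreeGroup (Fin k) ⧸ (⊤ : Subgroup (FreeGroup (Fin k))).lowerCentralSeries n) →*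
         (FreeGroup (Fin k) ⧸ (⊤ : Subgroup (FreeGroup (Fin k))).lowerCentralSeries n)) :
    Function.Bijective e ↔ Function.Bijective (Abelianization.map e) :=
  ⟨fun h => (MulEquiv.ofBijective e h).abelianizationCongr.bijective,
    FreeNilpotentGroup.bijective_of_bijective_abelianizationMap e⟩

/-- An endomorphism of the free `n`-step nilpotent group `F(k)/γ_{n+1}(F(k))`
(with `γ_{n+1} = lowerCentralSeries _ n`) is an automorphism iff the induced
endomorphism of its abelianization (which is `F(k)/γ₂(F(k)) ≅ ℤ^k`) is an automorphism. -/
theorem freeNilpotent_end_bijective_iff_abelianization (k n : ℕ) (hn : 1 ≤ n)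
    (e : (FreeGroup (Fin k) ⧸ (⊤ : Subgroup (FreeGroup (Fin k))).lowerCentralSeries n) →*
         (FreeGroup (Fin k) ⧸ (⊤ : Subgroup (FreeGroup (Fin k))).lowerCentralSeries n)) :
    Function.Bijective e ↔ Function.Bijective (Abelianization.map e) :=
  freeNilpotent_end_bijective_iff_abelianization_general k n e
end

section
/- Let k ≥ 1 and n ≥ 1. The group homomorphism Aut_{Gp}(F(k)) → Aut_{Gp}(ℤ^k) ≅ GL_k(ℤ) induced by abelianization is surjective. -/
/-!
Through the basis of generators, the abelianization of `F(α)` is `ℤ^α`, and its automorphisms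
are the matrices of `GL_α(ℤ)`. Running Euclid's algorithm on the columns one at a time writes
every matrix of `GL_α(ℤ)` as a product of the matrices of elementary row operations:
transvections, row swaps and diagonal matrices of signs. Each of these is induced by an
automorphism of `F(α)` (a Nielsen transformation `x_j ↦ x_j x_i ^ c`, a permutation of the
generators, a change of sign of some generators), and the induced automorphisms form a subgroup.
-/

open Matrix Finset

lemma Int.natAbs_emod_lt (a : ℤ) {b : ℤ} (hb : b ≠ 0) : (a % b).natAbs < b.natAbs := by
  have := Int.emod_nonneg a hb
  have := Int.emod_lt a hb
  omega

namespace Matrix.GeneralLinearGroup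

variable {n : Type*} [Fintype n] [DecidableEq n] {R : Type*} [CommRing R]

def transvection {i j : n} (hij : i ≠ j) (c : R) : GL n R :=
  SpecialLinearGroup.toGL (SpecialLinearGroup.transvection hij c)

@[simp]
lemma val_transvection {i j : n} (hij : i ≠ j) (c : R) :
    (transvection hij c : Matrix n n R) = Matrix.transvection i j c := rfl

def diagonal : (n → Rˣ) →* GL n R :=
  (Units.map (diagonalRingHom n R).toMonoidHom).comp MulEquiv.piUnits.symm.toMonoidHom

@[simp]
lemma val_diagonal (d : n → Rˣ) :
    (diagonal d : Matrix n n R) = Matrix.diagonal fun i => (d i : R) := rfl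

variable (n R) in
def rowOpSubgroup : Subgroup (GL n R) :=
  Subgroup.closure {g | (∃ (i j : n) (hij : i ≠ j) (c : R), g = transvection hij c) ∨
    (∃ i j : n, g = swap R i j) ∨ ∃ d : n → Rˣ, g = diagonal d}

lemma transvection_mem_rowOpSubgroup {i j : n} (hij : i ≠ j) (c : R) :
    transvection hij c ∈ rowOpSubgroup n R :=
  Subgroup.subset_closure (Or.inl ⟨i, j, hij, c, rfl⟩)

lemma swap_mem_rowOpSubgroup (i j : n) : swap R i j ∈ rowOpSubgroup n R :=
  Subgroup.subset_closure (Or.inr (Or.inl ⟨i, j, rfl⟩))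

lemma diagonal_mem_rowOpSubgroup (d : n → Rˣ) : diagonal d ∈ rowOpSubgroup n R :=
  Subgroup.subset_closure (Or.inr (Or.inr ⟨d, rfl⟩))

def EqOneOnCols (s : Finset n) (M : Matrix n n ℤ) : Prop :=
  ∀ l ∈ s, ∀ r, M r l = (1 : Matrix n n ℤ) r l

def offDiagColSize (m : n) (M : Matrix n n ℤ) : ℕ :=
  ∑ r ∈ univ.erase m, (M r m).natAbs

variable {s : Finset n} {m : n} {M : GL n ℤ}

lemma EqOneOnCols.apply_eq_zero (hM : EqOneOnCols s M) (hm : m ∉ s) {l : n} (hl : l ∈ s) :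
    (M : Matrix n n ℤ) m l = 0 := by
  rw [hM l hl, one_apply_ne (ne_of_mem_of_not_mem hl hm).symm]

/-- Row `m` of `M⁻¹` vanishes on `s`, because the columns of `M` in `s` are those of `1`; so the
`(m, m)` entry of `M⁻¹ * M = 1` reads `M⁻¹ m m * M m m = 1`. -/
lemma isUnit_apply_self_of_eqOneOnCols (hM : EqOneOnCols s M) (hm : m ∉ s)
    (hcol : ∀ r ∉ s, r ≠ m → (M : Matrix n n ℤ) r m = 0) :
    IsUnit ((M : Matrix n n ℤ) m m) := by
  set N : Matrix n n ℤ := ↑M⁻¹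
  have hNM : N * M = 1 := congrArg Units.val (inv_mul_cancel M)
  have hN : ∀ l ∈ s, N m l = 0 := fun l hl => by
    have hcol_l : (N * M) m l = (N * (1 : Matrix n n ℤ)) m l := by
      simp only [mul_apply, hM l hl]
    rwa [hNM, mul_one, one_apply_ne (ne_of_mem_of_not_mem hl hm).symm, eq_comm] at hcol_l
  have h1 : N m m * (M : Matrix n n ℤ) m m = 1 := by
    have := congrFun₂ hNM m m
    rwa [mul_apply, sum_eq_single m, one_apply_eq] at this
    · intro r _ hrm
      by_cases hr : r ∈ s
      · rw [hN r hr, zero_mul]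
      · rw [hcol r hr hrm, mul_zero]
    · simp
  exact IsUnit.of_mul_eq_one_right _ h1

/-- One step of the Euclidean algorithm on column `m`: replace the pivot by its remainder
modulo the entry in row `j`, then swap the two rows. -/
lemma exists_swap_step (hM : EqOneOnCols s M) (hm : m ∉ s) {j : n} (hj : j ∉ s) (hjm : j ≠ m)
    (hjm0 : (M : Matrix n n ℤ) j m ≠ 0) :
    ∃ E ∈ rowOpSubgroup n ℤ, EqOneOnCols s ↑(E * M) ∧
      offDiagColSize m ↑(E * M) < offDiagColSize m M := by
  set q := (M : Matrix n n ℤ) m m / (M : Matrix n n ℤ) j m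
  have hrows : ∀ r l, r ≠ m →
      (Matrix.transvection m j (-q) * (M : Matrix n n ℤ)) r l = (M : Matrix n n ℤ) r l :=
    fun r l hr => transvection_mul_apply_of_ne _ _ _ _ hr _ _
  refine ⟨swap ℤ m j * transvection hjm.symm (-q),
    mul_mem (swap_mem_rowOpSubgroup _ _) (transvection_mem_rowOpSubgroup _ _), ?_, ?_⟩
  all_goals rw [mul_assoc, Units.val_mul, val_swap, Units.val_mul, val_transvection]
  · intro l hl r
    have hlm : l ≠ m := ne_of_mem_of_not_mem hl hm
    have hlj : l ≠ j := ne_of_mem_of_not_mem hl hj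
    rcases eq_or_ne r m with rfl | hrm
    · rw [swap_mul_apply_left, hrows _ _ hjm, hM l hl, one_apply_ne hlj.symm,
        one_apply_ne hlm.symm]
    rcases eq_or_ne r j with rfl | hrj
    · rw [swap_mul_apply_right, transvection_mul_apply_same, hM l hl, hM l hl,
        one_apply_ne hlm.symm, one_apply_ne hlj.symm, mul_zero, add_zero]
    · rw [swap_mul_of_ne hrm hrj, hrows _ _ hrm, hM l hl]
  · have hrem : (Matrix.swap ℤ m j * (Matrix.transvection m j (-q) * (M : Matrix n n ℤ))) j m =
        (M : Matrix n n ℤ) m m % (M : Matrix n n ℤ) j m := by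
      rw [swap_mul_apply_right, transvection_mul_apply_same, neg_mul, ← sub_eq_add_neg,
        mul_comm, ← Int.emod_def]
    refine sum_lt_sum (fun r hr => ?_)
      ⟨j, mem_erase.2 ⟨hjm, mem_univ j⟩, hrem ▸ Int.natAbs_emod_lt _ hjm0⟩
    rcases eq_or_ne r j with rfl | hrj
    · exact hrem ▸ (Int.natAbs_emod_lt _ hjm0).le
    · rw [swap_mul_of_ne (ne_of_mem_erase hr) hrj, hrows _ _ (ne_of_mem_erase hr)]

/-- Once the pivot is `±1`, an entry of column `m` in a row `r ∈ s` is cleared by subtracting a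
multiple of row `m`; this does not disturb the columns in `s`, where row `m` vanishes. -/
lemma exists_clear_step (hM : EqOneOnCols s M) (hm : m ∉ s)
    (hu : IsUnit ((M : Matrix n n ℤ) m m)) {r : n} (hr : r ∈ s)
    (hrm0 : (M : Matrix n n ℤ) r m ≠ 0) :
    ∃ E ∈ rowOpSubgroup n ℤ, EqOneOnCols s ↑(E * M) ∧
      offDiagColSize m ↑(E * M) < offDiagColSize m M := by
  have hrm : r ≠ m := ne_of_mem_of_not_mem hr hm
  set c := -((M : Matrix n n ℤ) r m * (M : Matrix n n ℤ) m m)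
  have hrows : ∀ t l, t ≠ r →
      (Matrix.transvection r m c * (M : Matrix n n ℤ)) t l = (M : Matrix n n ℤ) t l :=
    fun t l ht => transvection_mul_apply_of_ne _ _ _ _ ht _ _
  refine ⟨transvection hrm c, transvection_mem_rowOpSubgroup _ _, ?_, ?_⟩
  all_goals rw [Units.val_mul, val_transvection]
  · intro l hl t
    rcases eq_or_ne t r with rfl | htr
    · rw [transvection_mul_apply_same, hM.apply_eq_zero hm hl, mul_zero, add_zero, hM l hl]
    · rw [hrows _ _ htr, hM l hl]
  · have hcleared : (Matrix.transvection r m c * (M : Matrix n n ℤ)) r m = 0 := by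
      rw [transvection_mul_apply_same, neg_mul, mul_assoc, Int.isUnit_mul_self hu, mul_one,
        add_neg_cancel]
    refine sum_lt_sum (fun t ht => ?_)
      ⟨r, mem_erase.2 ⟨hrm, mem_univ r⟩, by simpa [hcleared] using hrm0⟩
    rcases eq_or_ne t r with rfl | htr
    · simp [hcleared]
    · rw [hrows _ _ htr]

lemma exists_offDiagColSize_lt (hM : EqOneOnCols s M) (hm : m ∉ s)
    (hpos : offDiagColSize m M ≠ 0) :
    ∃ E ∈ rowOpSubgroup n ℤ, EqOneOnCols s ↑(E * M) ∧
      offDiagColSize m ↑(E * M) < offDiagColSize m M := by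
  by_cases h : ∃ j ∉ s, j ≠ m ∧ (M : Matrix n n ℤ) j m ≠ 0
  · obtain ⟨j, hj, hjm, hjm0⟩ := h
    exact exists_swap_step hM hm hj hjm hjm0
  push Not at h
  obtain ⟨r, hr, hrm0⟩ : ∃ r ∈ univ.erase m, (M : Matrix n n ℤ) r m ≠ 0 := by
    simpa [offDiagColSize, sum_eq_zero_iff] using hpos
  have hrs : r ∈ s := by
    by_contra hrs
    exact hrm0 (h r hrs (ne_of_mem_erase hr))
  exact exists_clear_step hM hm (isUnit_apply_self_of_eqOneOnCols hM hm h) hrs hrm0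

lemma exists_eqOneOnCols_insert_of_offDiagColSize_eq_zero (hM : EqOneOnCols s M) (hm : m ∉ s)
    (h0 : offDiagColSize m M = 0) :
    ∃ E ∈ rowOpSubgroup n ℤ, EqOneOnCols (insert m s) ↑(E * M) := by
  have hcol : ∀ r ≠ m, (M : Matrix n n ℤ) r m = 0 := fun r hr =>
    Int.natAbs_eq_zero.1 (sum_eq_zero_iff.1 h0 r (mem_erase.2 ⟨hr, mem_univ r⟩))
  obtain ⟨u, hu⟩ := isUnit_apply_self_of_eqOneOnCols hM hm fun r _ hr => hcol r hr
  refine ⟨diagonal (Pi.mulSingle m u⁻¹), diagonal_mem_rowOpSubgroup _, ?_⟩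
  rw [Units.val_mul, val_diagonal]
  intro l hl r
  rw [diagonal_mul]
  rcases mem_insert.1 hl with rfl | hls
  · rcases eq_or_ne r l with rfl | hrl
    · rw [Pi.mulSingle_eq_same, ← hu, Units.inv_mul, one_apply_eq]
    · rw [hcol r hrl, mul_zero, one_apply_ne hrl]
  · rcases eq_or_ne r m with rfl | hrm
    · rw [hM.apply_eq_zero hm hls, mul_zero, one_apply_ne (ne_of_mem_of_not_mem hls hm).symm]
    · rw [Pi.mulSingle_eq_of_ne hrm, Units.val_one, one_mul, hM l hls]

lemma exists_eqOneOnCols_insert (hM : EqOneOnCols s M) (hm : m ∉ s) :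
    ∃ E ∈ rowOpSubgroup n ℤ, EqOneOnCols (insert m s) ↑(E * M) := by
  induction hN : offDiagColSize m M using Nat.strong_induction_on generalizing M with
  | _ N ih =>
    rcases eq_or_ne N 0 with rfl | hN0
    · exact exists_eqOneOnCols_insert_of_offDiagColSize_eq_zero hM hm hN
    obtain ⟨E, hE, hEM, hlt⟩ := exists_offDiagColSize_lt hM hm (hN ▸ hN0)
    obtain ⟨F, hF, hFEM⟩ := ih _ (hN ▸ hlt) hEM rfl
    exact ⟨F * E, mul_mem hF hE, by rwa [mul_assoc]⟩

lemma exists_eqOneOnCols (M : GL n ℤ) (s : Finset n) :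
    ∃ E ∈ rowOpSubgroup n ℤ, EqOneOnCols s ↑(E * M) := by
  induction s using Finset.induction_on with
  | empty => exact ⟨1, one_mem _, fun l hl => absurd hl (notMem_empty l)⟩
  | insert m s hm ih =>
    obtain ⟨E, hE, hEM⟩ := ih
    obtain ⟨F, hF, hFEM⟩ := exists_eqOneOnCols_insert hEM hm
    exact ⟨F * E, mul_mem hF hE, by rwa [mul_assoc]⟩

theorem rowOpSubgroup_int_eq_top : rowOpSubgroup n ℤ = ⊤ := by
  refine eq_top_iff.2 fun M _ => ?_
  obtain ⟨E, hE, hEM⟩ := exists_eqOneOnCols M univ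
  have hEM1 : E * M = 1 := Units.ext <| Matrix.ext fun r l => hEM l (mem_univ l) r
  rw [eq_inv_of_mul_eq_one_right hEM1]
  exact inv_mem hE

end Matrix.GeneralLinearGroup

namespace FreeGroup

variable {α : Type*}

def transvectionHom [DecidableEq α] (i j : α) (c : ℤ) : FreeGroup α →* FreeGroup α :=
  lift (Function.update of j (of j * of i ^ c))

lemma transvectionHom_comp [DecidableEq α] {i j : α} (hij : i ≠ j) (c d : ℤ) :
    (transvectionHom i j c).comp (transvectionHom i j d) = transvectionHom i j (c + d) := by
  refine ext_hom _ _ fun l => ?_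
  rcases eq_or_ne l j with rfl | hl
  · simp [transvectionHom, hij, _root_.zpow_add, mul_assoc]
  · simp [transvectionHom, hl]

lemma transvectionHom_zero [DecidableEq α] (i j : α) :
    transvectionHom i j 0 = MonoidHom.id (FreeGroup α) :=
  ext_hom _ _ fun l => by rcases eq_or_ne l j with rfl | hl <;> simp [transvectionHom, *]

def transvection [DecidableEq α] {i j : α} (hij : i ≠ j) (c : ℤ) : MulAut (FreeGroup α) :=
  (transvectionHom i j c).toMulEquiv (transvectionHom i j (-c))
    (by rw [transvectionHom_comp hij, neg_add_cancel, transvectionHom_zero])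
    (by rw [transvectionHom_comp hij, add_neg_cancel, transvectionHom_zero])

def zpowGeneratorsHom (d : α → ℤˣ) : FreeGroup α →* FreeGroup α :=
  lift fun l => of l ^ (d l : ℤ)

lemma zpowGeneratorsHom_comp_self (d : α → ℤˣ) :
    (zpowGeneratorsHom d).comp (zpowGeneratorsHom d) = MonoidHom.id (FreeGroup α) :=
  ext_hom _ _ fun l => by
    simp [zpowGeneratorsHom, ← _root_.zpow_mul, ← Units.val_mul, Int.units_mul_self]

def zpowGenerators (d : α → ℤˣ) : MulAut (FreeGroup α) :=
  (zpowGeneratorsHom d).toMulEquiv (zpowGeneratorsHom d) (zpowGeneratorsHom_comp_self d)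
    (zpowGeneratorsHom_comp_self d)

end FreeGroup

namespace MulAut

def abelianization (G : Type*) [Group G] : MulAut G →* MulAut (Abelianization G) where
  toFun := MulEquiv.abelianizationCongr
  map_one' := abelianizationCongr_refl
  map_mul' e f := (abelianizationCongr_trans f e).symm

lemma abelianization_apply_of {G : Type*} [Group G] (e : MulAut G) (x : G) :
    abelianization G e (.of x) = .of (e x) :=
  rfl

def toIntLinearEquiv (G : Type*) [CommGroup G] :
    MulAut G ≃* (Additive G ≃ₗ[ℤ] Additive G) where
  toFun e := (MulEquiv.toAdditive e).toIntLinearEquiv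
  invFun e := MulEquiv.toAdditive.symm e.toAddEquiv
  left_inv _ := rfl
  right_inv _ := rfl
  map_mul' _ _ := rfl

end MulAut

namespace FreeGroup

variable {α : Type*}

variable (α) in
/-- `FreeAbelianGroup α` is by definition `Additive (Abelianization (FreeGroup α))`. -/
noncomputable def abelianizationBasis :
    Module.Basis α ℤ (Additive (Abelianization (FreeGroup α))) :=
  FreeAbelianGroup.basis α

lemma abelianizationBasis_repr_apply (l : α) :
    (abelianizationBasis α).repr (Additive.ofMul (.of (of l))) = Finsupp.single l 1 :=
  FreeAbelianGroup.toFinsupp_of l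

lemma abelianizationBasis_apply (l : α) :
    abelianizationBasis α l = Additive.ofMul (.of (of l)) :=
  Module.Basis.apply_eq_iff.2 (abelianizationBasis_repr_apply l)

lemma ext_mulAut_abelianization {e f : MulAut (Abelianization (FreeGroup α))}
    (h : ∀ l, e (.of (of l)) = f (.of (of l))) : e = f :=
  MulEquiv.toMonoidHom_injective <| Abelianization.hom_ext _ _ <| ext_hom _ _ h

variable [Fintype α] [DecidableEq α]

variable (α) in
noncomputable def glEquivAutAbelianization :
    GL α ℤ ≃* MulAut (Abelianization (FreeGroup α)) :=
  (GeneralLinearGroup.toLin' (abelianizationBasis α)).trans <|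
    (LinearMap.GeneralLinearGroup.generalLinearEquiv ℤ _).trans (MulAut.toIntLinearEquiv _).symm

lemma ofMul_glEquivAutAbelianization_apply (M : GL α ℤ) (l : α) :
    Additive.ofMul (glEquivAutAbelianization α M (.of (of l))) =
      ∑ r, (M : Matrix α α ℤ) r l • Additive.ofMul (Abelianization.of (of r)) := by
  have h := GeneralLinearGroup.toLin'_apply (abelianizationBasis α) M (Additive.ofMul (.of (of l)))
  rw [abelianizationBasis_repr_apply, Finsupp.single_eq_pi_single, mulVec_single_one,
    Fintype.linearCombination_apply] at h
  simp only [abelianizationBasis_apply] at h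
  exact h

lemma glEquivAutAbelianization_transvection {i j : α} (hij : i ≠ j) (c : ℤ) :
    glEquivAutAbelianization α (GeneralLinearGroup.transvection hij c) =
      MulAut.abelianization _ (transvection hij c) := by
  refine ext_mulAut_abelianization fun l => Additive.ofMul.injective ?_
  rw [ofMul_glEquivAutAbelianization_apply, MulAut.abelianization_apply_of]
  simp only [GeneralLinearGroup.val_transvection, Matrix.transvection, Matrix.add_apply,
    one_apply, single_apply, add_smul, ite_smul, one_smul, zero_smul, sum_add_distrib,
    sum_ite_eq']
  rcases eq_or_ne l j with rfl | hl
  · simp [transvection, transvectionHom]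
  · simp [transvection, transvectionHom, hl, hl.symm]

lemma glEquivAutAbelianization_swap (i j : α) :
    glEquivAutAbelianization α (GeneralLinearGroup.swap ℤ i j) =
      MulAut.abelianization _ (freeGroupCongr (Equiv.swap i j)) := by
  refine ext_mulAut_abelianization fun l => Additive.ofMul.injective ?_
  rw [ofMul_glEquivAutAbelianization_apply, MulAut.abelianization_apply_of]
  simp only [GeneralLinearGroup.val_swap, Matrix.swap, PEquiv.toMatrix_apply, ite_smul, one_smul,
    zero_smul]
  simp [freeGroupCongr, Equiv.swap_apply_eq_iff]

lemma glEquivAutAbelianization_diagonal (d : α → ℤˣ) :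
    glEquivAutAbelianization α (GeneralLinearGroup.diagonal d) =
      MulAut.abelianization _ (zpowGenerators d) := by
  refine ext_mulAut_abelianization fun l => Additive.ofMul.injective ?_
  rw [ofMul_glEquivAutAbelianization_apply, MulAut.abelianization_apply_of]
  simp only [GeneralLinearGroup.val_diagonal, diagonal_apply, ite_smul, zero_smul, sum_ite_eq']
  simp [zpowGenerators, zpowGeneratorsHom]

theorem mulAut_abelianization_surjective :
    Function.Surjective (MulAut.abelianization (FreeGroup α)) := by
  have hle : GeneralLinearGroup.rowOpSubgroup α ℤ ≤
      (MulAut.abelianization (FreeGroup α)).range.comap (glEquivAutAbelianization α) := by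
    refine (Subgroup.closure_le _).2 ?_
    rintro g (⟨i, j, hij, c, rfl⟩ | ⟨i, j, rfl⟩ | ⟨d, rfl⟩)
    · exact ⟨_, (glEquivAutAbelianization_transvection hij c).symm⟩
    · exact ⟨_, (glEquivAutAbelianization_swap i j).symm⟩
    · exact ⟨_, (glEquivAutAbelianization_diagonal d).symm⟩
  rw [GeneralLinearGroup.rowOpSubgroup_int_eq_top] at hle
  intro a
  simpa using hle (Subgroup.mem_top ((glEquivAutAbelianization α).symm a))

end FreeGroup

theorem aut_free_to_aut_abelianization_surjective_general (k : ℕ)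
    (a : MulAut (Abelianization (FreeGroup (Fin k)))) :
    ∃ e : MulAut (FreeGroup (Fin k)),
      ∀ x : FreeGroup (Fin k),
        Abelianization.of (e x) = a (Abelianization.of x) := by
  obtain ⟨e, rfl⟩ := FreeGroup.mulAut_abelianization_surjective a
  exact ⟨e, fun x => rfl⟩

/-- The natural map `Aut(F(k)) → Aut(ℤ^k) ≅ GL_k(ℤ)` induced by abelianization is
surjective: every automorphism of the abelianization of `F(k)` is induced by an
automorphism of `F(k)`. -/
theorem aut_free_to_aut_abelianization_surjective (k : ℕ) (hk : 1 ≤ k)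
    (a : MulAut (Abelianization (FreeGroup (Fin k)))) :
    ∃ e : MulAut (FreeGroup (Fin k)),
      ∀ x : FreeGroup (Fin k),
        Abelianization.of (e x) = a (Abelianization.of x) :=
  aut_free_to_aut_abelianization_surjective_general k a
end
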